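/- Let n, m be coprime odd positive integers. The sign of the permutation of Z/mZ given by multiplication by n equals the Jacobi symbol (n/m). -/

import Mathlib

/-!
Multiplication by a unit `u` of `ZMod m` permutes `ZMod m`, and its sign is a character
`zolotarevChar m` of `(ZMod m)ˣ`. For an odd prime `p`, a generator of `(ZMod p)ˣ` acts as a
`(p - 1)`-cycle on the nonzero residues, so it has sign `-1`; it is also a non-square, so the
sign character and the Legendre symbol agree on a generator, hence everywhere.

For `m = a * b`, writing `x = r + a * q` identifies `ZMod (a * b)` with `ZMod a × ZMod b`, and
multiplication by `n` becomes the shear `(r, q) ↦ (n r, carry r + n q)`. Its sign is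
`sign(n on ZMod a) ^ b * sign(n on ZMod b) ^ a`, since translations of a group of odd order are
even. For odd `a` and `b` this is the multiplicativity of the Jacobi symbol in the modulus.
-/

open Equiv Equiv.Perm

theorem Int.units_pow_of_odd (u : ℤˣ) {k : ℕ} (hk : Odd k) : u ^ k = u := by
  rw [Int.units_pow_eq_pow_mod_two, Nat.odd_iff.mp hk, pow_one]

namespace Equiv.Perm

variable {α β : Type*} [Fintype α] [DecidableEq α]

theorem sign_eq_one_of_pow_eq_one_of_odd {σ : Perm α} {k : ℕ} (hk : Odd k) (hσ : σ ^ k = 1) :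
    sign σ = 1 := by
  rw [← Int.units_pow_of_odd (sign σ) hk, ← map_pow, hσ, map_one]

theorem sign_addLeft_of_odd_card {G : Type*} [AddGroup G] [Fintype G] [DecidableEq G]
    (hG : Odd (Fintype.card G)) (c : G) : sign (Equiv.addLeft c) = 1 :=
  sign_eq_one_of_pow_eq_one_of_odd hG (by rw [nsmul_addLeft, card_nsmul_eq_zero, addLeft_zero])

theorem sign_prodShear [Fintype β] [DecidableEq β] (f : Perm α) (g : α → Perm β) :
    sign (prodShear f g) = sign f ^ Fintype.card β * ∏ a, sign (g a) := by
  have : prodShear f g = prodCongrLeft (fun _ : β => f) * prodCongrRight g := rfl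
  rw [this, map_mul, sign_prodCongrLeft, sign_prodCongrRight, Finset.prod_const,
    Finset.card_univ]

end Equiv.Perm

namespace FiniteField

variable {F : Type*} [Field F] {g : Fˣ}

theorem generator_ne_one (hF : ringChar F ≠ 2) (hg : ∀ x, x ∈ Subgroup.zpowers g) :
    g ≠ 1 := by
  rintro rfl
  obtain ⟨k, hk⟩ := hg (-1)
  exact Ring.neg_one_ne_one_of_char_ne_two hF (by simpa using congrArg Units.val hk.symm)

variable [Fintype F] [DecidableEq F]

theorem support_toPerm_units (hg1 : g ≠ 1) :
    (MulAction.toPerm g : Perm F).support = {0}ᶜ := by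
  ext x
  by_cases hx : x = 0
  · simp [hx]
  · simp [Units.smul_def, mul_eq_right₀ hx, hg1, hx]

theorem isCycle_toPerm_of_generator (hF : ringChar F ≠ 2) (hg : ∀ x, x ∈ Subgroup.zpowers g) :
    (MulAction.toPerm g : Perm F).IsCycle := by
  have hsupp := support_toPerm_units (F := F) (generator_ne_one hF hg)
  refine ⟨1, mem_support.mp (by simp [hsupp]), fun y hy => ?_⟩
  obtain ⟨k, hk⟩ := hg (Units.mk0 y (by simpa [hsupp] using mem_support.mpr hy))
  refine ⟨k, ?_⟩
  rw [← MulAction.toPermHom_apply, ← map_zpow, MulAction.toPermHom_apply,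
    MulAction.toPerm_apply, show g ^ k = Units.mk0 y _ from hk, Units.smul_def, Units.val_mk0,
    smul_eq_mul, mul_one]

theorem sign_toPerm_of_generator (hF : ringChar F ≠ 2) (hg : ∀ x, x ∈ Subgroup.zpowers g) :
    sign (MulAction.toPerm g : Perm F) = -1 := by
  have heven : Even (Fintype.card F - 1) :=
    Nat.Odd.sub_odd (Nat.odd_iff.mpr (odd_card_of_char_ne_two hF)) odd_one
  rw [(isCycle_toPerm_of_generator hF hg).sign, support_toPerm_units (generator_ne_one hF hg),
    Finset.card_compl, Finset.card_singleton, heven.neg_one_pow]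

theorem quadraticChar_of_generator (hF : ringChar F ≠ 2) (hg : ∀ x, x ∈ Subgroup.zpowers g) :
    quadraticChar F g = -1 := by
  have hcard : 2 < Fintype.card F := by
    have := odd_card_of_char_ne_two hF
    have := Fintype.one_lt_card (α := F)
    omega
  rw [quadraticChar_eq_pow_of_char_ne_two hF g.ne_zero, if_neg]
  rw [← Units.val_pow_eq_pow_val, Units.val_eq_one]
  refine pow_ne_one_of_lt_orderOf (by omega) ?_
  rw [orderOf_eq_card_of_forall_mem_zpowers hg, Nat.card_eq_fintype_card, Fintype.card_units]
  omega

end FiniteField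

namespace ZMod

variable {a b : ℕ} [NeZero a] [NeZero b]

noncomputable def modDivEquiv (a b : ℕ) [NeZero a] [NeZero b] :
    ZMod (a * b) ≃ ZMod a × ZMod b :=
  Equiv.ofBijective (fun x => ((x.val : ZMod a), ((x.val / a : ℕ) : ZMod b))) <| by
    refine (Fintype.bijective_iff_injective_and_card _).mpr
      ⟨fun x y hxy => ZMod.val_injective _ ?_, by simp [ZMod.card]⟩
    obtain ⟨hmod, hdiv⟩ := Prod.mk.inj hxy
    replace hmod := congrArg ZMod.val hmod
    replace hdiv := congrArg ZMod.val hdiv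
    simp only [ZMod.val_natCast, Nat.mod_eq_of_lt (Nat.div_lt_of_lt_mul (ZMod.val_lt _))]
      at hmod hdiv
    rw [← Nat.mod_add_div x.val a, ← Nat.mod_add_div y.val a, hmod, hdiv]

theorem modDivEquiv_apply (x : ZMod (a * b)) :
    modDivEquiv a b x = ((x.val : ZMod a), ((x.val / a : ℕ) : ZMod b)) := rfl

theorem modDivEquiv_natCast_mul (n : ℕ) (x : ZMod (a * b)) :
    modDivEquiv a b (n * x) =
      (n * (modDivEquiv a b x).1,
        ((n * (modDivEquiv a b x).1.val / a : ℕ) : ZMod b) + n * (modDivEquiv a b x).2) := by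
  have hval : ((n * x : ZMod (a * b))).val = n * x.val % (a * b) := by
    rw [ZMod.val_mul, ZMod.val_natCast, Nat.mod_mul_mod]
  have hcarry : n * x.val / a = n * (x.val % a) / a + n * (x.val / a) := by
    conv_lhs => rw [← Nat.mod_add_div x.val a, mul_add, mul_left_comm]
    rw [Nat.add_mul_div_left _ _ (Nat.pos_of_neZero a)]
  simp only [modDivEquiv_apply, hval, ZMod.val_natCast, Prod.mk.injEq]
  constructor
  · rw [← ZMod.natCast_mod, Nat.mod_mul_right_mod, ZMod.natCast_mod]
    push_cast
    rfl
  · rw [Nat.mod_mul_right_div_self, ZMod.natCast_mod, hcarry]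
    push_cast
    rfl

theorem modDivEquiv_permCongr_toPerm (n : ℕ) (h : n.Coprime (a * b)) (ha : n.Coprime a)
    (hb : n.Coprime b) :
    (modDivEquiv a b).permCongr (MulAction.toPerm (unitOfCoprime n h)) =
      prodShear (MulAction.toPerm (unitOfCoprime n ha)) fun r =>
        Equiv.addLeft ((n * r.val / a : ℕ) : ZMod b) * MulAction.toPerm (unitOfCoprime n hb) := by
  ext1 rq
  obtain ⟨x, rfl⟩ := (modDivEquiv a b).surjective rq
  simp only [permCongr_apply, symm_apply_apply, MulAction.toPerm_apply, Units.smul_def,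
    coe_unitOfCoprime, smul_eq_mul, modDivEquiv_natCast_mul]
  rfl

end ZMod

def zolotarevChar (m : ℕ) [NeZero m] : (ZMod m)ˣ →* ℤˣ :=
  sign.comp (MulAction.toPermHom (ZMod m)ˣ (ZMod m))

theorem zolotarevChar_apply {m : ℕ} [NeZero m] (u : (ZMod m)ˣ) :
    zolotarevChar m u = sign (MulAction.toPerm u : Perm (ZMod m)) := rfl

theorem zolotarevChar_mul_unitOfCoprime {a b : ℕ} [NeZero a] [NeZero b] (ha : Odd a)
    (hb : Odd b) (n : ℕ) (h : n.Coprime (a * b)) (ha' : n.Coprime a) (hb' : n.Coprime b) :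
    zolotarevChar (a * b) (ZMod.unitOfCoprime n h) =
      zolotarevChar a (ZMod.unitOfCoprime n ha') * zolotarevChar b (ZMod.unitOfCoprime n hb') := by
  simp only [zolotarevChar_apply]
  rw [← sign_permCongr (ZMod.modDivEquiv a b), ZMod.modDivEquiv_permCongr_toPerm n h ha' hb',
    sign_prodShear]
  simp [sign_addLeft_of_odd_card, ZMod.card, Int.units_pow_of_odd, ha, hb]

theorem zolotarevChar_eq_toUnitHom_quadraticChar (p : ℕ) [Fact p.Prime] (hp : p ≠ 2) :
    zolotarevChar p = (quadraticChar (ZMod p)).toUnitHom := by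
  obtain ⟨g, hg⟩ := IsCyclic.exists_generator (α := (ZMod p)ˣ)
  have hchar : ringChar (ZMod p) ≠ 2 := by rwa [ZMod.ringChar_zmod_n]
  rw [MonoidHom.eq_iff_eq_on_generator hg, Units.ext_iff, MulChar.coe_toUnitHom,
    FiniteField.quadraticChar_of_generator hchar hg, zolotarevChar_apply,
    FiniteField.sign_toPerm_of_generator hchar hg]
  rfl

theorem zolotarevChar_unitOfCoprime {m : ℕ} [NeZero m] (hm : Odd m) (n : ℕ) (h : n.Coprime m) :
    (zolotarevChar m (ZMod.unitOfCoprime n h) : ℤ) = jacobiSym n m := by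
  revert ‹NeZero m›
  induction m using Nat.recOnMul with
  | zero => exact absurd hm (by decide)
  | one => intro; simp [Subsingleton.elim (ZMod.unitOfCoprime n h) 1]
  | prime p hp =>
    intro
    have : Fact p.Prime := ⟨hp⟩
    have hp2 : p ≠ 2 := by rintro rfl; exact absurd hm (by decide)
    rw [zolotarevChar_eq_toUnitHom_quadraticChar p hp2, MulChar.coe_toUnitHom,
      ZMod.coe_unitOfCoprime, ← jacobiSym.legendreSym.to_jacobiSym, legendreSym,
      Int.cast_natCast]
  | mul a b iha ihb =>
    intro
    obtain ⟨ha, hb⟩ := Nat.odd_mul.mp hm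
    have : NeZero a := ⟨ha.pos.ne'⟩
    have : NeZero b := ⟨hb.pos.ne'⟩
    have ha' : n.Coprime a := Nat.Coprime.coprime_mul_right_right h
    have hb' : n.Coprime b := Nat.Coprime.coprime_mul_left_right h
    rw [zolotarevChar_mul_unitOfCoprime ha hb n h ha' hb', Units.val_mul, iha ha ha', ihb hb hb',
      jacobiSym.mul_right]

theorem stmt_10_general (n m : ℕ) (hm : Odd m) (hm0 : 0 < m)
    (h : Nat.Coprime n m) :
    haveI : NeZero m := ⟨hm0.ne'⟩
    ∀ σ : Equiv.Perm (ZMod m), (∀ x, σ x = (n : ZMod m) * x) →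
      (Equiv.Perm.sign σ : ℤ) = jacobiSym (n : ℤ) m := by
  have : NeZero m := ⟨hm0.ne'⟩
  intro σ hσ
  obtain rfl : σ = MulAction.toPerm (ZMod.unitOfCoprime n h) := Equiv.ext hσ
  exact zolotarevChar_unitOfCoprime hm n h

/-- For coprime odd positive n, m, the sign of multiplication by n on ℤ/mℤ equals the
Jacobi symbol (n/m). -/
theorem stmt_10 (n m : ℕ) (hn : Odd n) (hm : Odd m) (hn0 : 0 < n) (hm0 : 0 < m)
    (h : Nat.Coprime n m) :
    haveI : NeZero m := ⟨hm0.ne'⟩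
    ∀ σ : Equiv.Perm (ZMod m), (∀ x, σ x = (n : ZMod m) * x) →
      (Equiv.Perm.sign σ : ℤ) = jacobiSym (n : ℤ) m :=
  stmt_10_general n m hm hm0 h
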